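/- Let T ⊆ ℝ^d be a faceshare-free cube tiling of ℝ^d, fix a, b ∈ ℝ and i ∈ {1,...,d}, and suppose there exists no t ∈ T with t_i ≡ a + b (mod 1). Define T' = {t ∈ T : t_i ≢ a (mod 1)} ∪ {t + b·e_i : t ∈ T, t_i ≡ a (mod 1)}. Then T' is a faceshare-free cube tiling of ℝ^d. -/

import Mathlib

/-- The half-open unit cube `[x_1, x_1+1) × ⋯ × [x_d, x_d+1)` with corner `x`. -/
def cube (d : ℕ) (x : Fin d → ℝ) : Set (Fin d → ℝ) :=
  {y | ∀ i, x i ≤ y i ∧ y i < x i + 1}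

/-- `T` is a cube tiling of `ℝ^d`: the cubes with corners in `T` are pairwise
disjoint and their union is all of `ℝ^d`. -/
def IsTiling (d : ℕ) (T : Set (Fin d → ℝ)) : Prop :=
  (T.Pairwise fun t t' => Disjoint (cube d t) (cube d t')) ∧
  (⋃ t ∈ T, cube d t) = Set.univ

/-- The `i`-th standard basis vector of `ℝ^d`. -/
def stdBasis (d : ℕ) (i : Fin d) : Fin d → ℝ := fun j => if j = i then 1 else 0

/-- Two cubes (given by their corners `x`, `y`) faceshare if `y = x ± e_i`
for some standard basis vector `e_i`. -/
def Faceshare (d : ℕ) (x y : Fin d → ℝ) : Prop :=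
  ∃ i : Fin d, y = x + stdBasis d i ∨ y = x - stdBasis d i

/-- A tiling is faceshare-free if no two distinct cubes of it faceshare. -/
def FaceshareFree (d : ℕ) (T : Set (Fin d → ℝ)) : Prop :=
  ∀ t ∈ T, ∀ t' ∈ T, t ≠ t' → ¬ Faceshare d t t'

/-- A tiling `T` is periodic if `t + 2z ∈ T` for every `t ∈ T` and `z ∈ ℤ^d`. -/
def PeriodicTiling (d : ℕ) (T : Set (Fin d → ℝ)) : Prop :=
  ∀ t ∈ T, ∀ z : Fin d → ℤ, (fun j => t j + 2 * (z j : ℝ)) ∈ T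

/-- A tiling is `s`-discrete if for each coordinate `i`, the values `t i` modulo 1
over `t ∈ T` take at most `s` distinct values. -/
def SDiscrete (d s : ℕ) (T : Set (Fin d → ℝ)) : Prop :=
  ∀ i : Fin d, ∃ S : Finset ℝ, S.card ≤ s ∧ ∀ t ∈ T, Int.fract (t i) ∈ S

/-!
The tiles meeting a line in direction `e_i` cut it into half-open unit intervals, so their
`i`-th corner coordinates are all congruent mod 1. Hence the tiles with `t i ≡ a` form whole
columns, and sliding each of these columns by `b e_i` again gives a tiling. Two tiles of `T'`
that are both shifted or both unshifted faceshare only if they did in `T`; a shifted tile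
`s + b e_i` and an unshifted `t` that faceshare would give `t i ≡ s i + b ≡ a + b`.
-/

open Set Function AddCommGroup

theorem modEq_one_iff_exists_int {a b : ℝ} : a ≡ b [PMOD 1] ↔ ∃ z : ℤ, b - a = z := by
  simp only [modEq_iff_zsmul', zsmul_one]

/-- A partition of `ℝ` into half-open unit intervals `[a, a + 1)` is a translate of the
partition by `ℤ`: once `a` is a left endpoint, so is `a + 1`, and every endpoint `a' ≥ a`
lies in `[a + n, a + n + 1)` for `n = ⌊a' - a⌋₊`. -/
theorem modEq_one_of_pairwiseDisjoint_Ico {A : Set ℝ}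
    (hdisj : A.PairwiseDisjoint fun a => Ico a (a + 1))
    (hcover : ∀ s, ∃ a ∈ A, s ∈ Ico a (a + 1)) {a a' : ℝ} (ha : a ∈ A) (ha' : a' ∈ A) :
    a ≡ a' [PMOD 1] := by
  have add_one_mem : ∀ c ∈ A, c + 1 ∈ A := by
    intro c hc
    obtain ⟨c', hc', hle, hlt⟩ := hcover (c + 1)
    have hcc' : c < c' := by linarith
    convert hc'
    by_contra hne
    have hc'c : c' ∈ Ico c (c + 1) := ⟨hcc'.le, lt_of_le_of_ne hle (Ne.symm hne)⟩
    exact hcc'.ne (hdisj.elim_set hc hc' c' hc'c ⟨le_rfl, lt_add_one c'⟩)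
  have add_nat_mem : ∀ c ∈ A, ∀ n : ℕ, c + n ∈ A := by
    intro c hc n
    induction n with
    | zero => simpa using hc
    | succ n ih => simpa [add_assoc] using add_one_mem _ ih
  have of_le : ∀ {c c'}, c ∈ A → c' ∈ A → c ≤ c' → c ≡ c' [PMOD 1] := by
    intro c c' hc hc' hcc'
    set n := ⌊c' - c⌋₊
    have hn : c' ∈ Ico (c + n) (c + n + 1) :=
      ⟨by linarith [Nat.floor_le (sub_nonneg.2 hcc')], by linarith [Nat.lt_floor_add_one (c' - c)]⟩
    have heq : c + n = c' := hdisj.elim_set (add_nat_mem c hc n) hc' c' hn ⟨le_rfl, lt_add_one c'⟩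
    exact modEq_one_iff_exists_int.2 ⟨n, by rw [← heq]; push_cast; ring⟩
  rcases le_total a a' with h | h
  · exact of_le ha ha' h
  · exact (of_le ha' ha h).symm

variable {d : ℕ}

theorem mem_cube_add_iff {x v y : Fin d → ℝ} : y ∈ cube d (x + v) ↔ y - v ∈ cube d x := by
  simp only [cube, mem_ofPred_eq, Pi.add_apply, Pi.sub_apply, le_sub_iff_add_le,
    sub_lt_iff_lt_add, add_right_comm _ (v _) 1]

theorem update_mem_cube {x y : Fin d → ℝ} {i : Fin d} {r s : ℝ}
    (hr : update y i r ∈ cube d x) (hs : s ∈ Ico (x i) (x i + 1)) : update y i s ∈ cube d x := by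
  intro j
  rcases eq_or_ne j i with rfl | hj
  · simpa using hs
  · simpa [hj] using hr j

theorem sub_smul_stdBasis (y : Fin d → ℝ) (i : Fin d) (b : ℝ) :
    y - b • stdBasis d i = update y i (y i - b) := by
  ext j
  rcases eq_or_ne j i with rfl | hj <;> simp [stdBasis, *]

namespace IsTiling

variable {T : Set (Fin d → ℝ)}

theorem eq_of_mem_cube (hT : IsTiling d T) {t t' y : Fin d → ℝ} (ht : t ∈ T) (ht' : t' ∈ T)
    (hy : y ∈ cube d t) (hy' : y ∈ cube d t') : t = t' :=
  hT.1.eq ht ht' (not_disjoint_iff.2 ⟨y, hy, hy'⟩)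

theorem exists_mem_cube (hT : IsTiling d T) (y : Fin d → ℝ) : ∃ t ∈ T, y ∈ cube d t := by
  simpa using hT.2.ge (mem_univ y)

theorem modEq_of_mem_cube_update (hT : IsTiling d T) {t t' y : Fin d → ℝ} {i : Fin d} {s : ℝ}
    (ht : t ∈ T) (ht' : t' ∈ T) (hy : y ∈ cube d t) (hs : update y i s ∈ cube d t') :
    t i ≡ t' i [PMOD 1] := by
  set A := (· i) '' {u ∈ T | ∃ r, update y i r ∈ cube d u}
  have hdisj : A.PairwiseDisjoint fun a => Ico a (a + 1) := by
    rintro _ ⟨u, ⟨hu, r, hr⟩, rfl⟩ _ ⟨u', ⟨hu', r', hr'⟩, rfl⟩ hne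
    refine Set.disjoint_left.2 fun p hp hp' => hne ?_
    rw [hT.eq_of_mem_cube hu hu' (update_mem_cube hr hp) (update_mem_cube hr' hp')]
  have hcover : ∀ s, ∃ a ∈ A, s ∈ Ico a (a + 1) := by
    intro s
    obtain ⟨u, hu, hsu⟩ := hT.exists_mem_cube (update y i s)
    exact ⟨u i, ⟨u, ⟨hu, s, hsu⟩, rfl⟩, by simpa using hsu i⟩
  exact modEq_one_of_pairwiseDisjoint_Ico hdisj hcover
    ⟨t, ⟨ht, y i, by rwa [update_eq_self]⟩, rfl⟩ ⟨t', ⟨ht', s, hs⟩, rfl⟩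

end IsTiling

/-- The paper's `T'` is `shiftTiles T (fun t => t i ≡ a (mod 1)) (b • e_i)`. -/
def shiftTiles (T : Set (Fin d → ℝ)) (P : (Fin d → ℝ) → Prop) (v : Fin d → ℝ) :
    Set (Fin d → ℝ) :=
  {t | t ∈ T ∧ ¬ P t} ∪ {t' | ∃ t, t ∈ T ∧ P t ∧ t' = t + v}

theorem IsTiling.shiftTiles {T : Set (Fin d → ℝ)} (hT : IsTiling d T)
    {P : (Fin d → ℝ) → Prop} {v : Fin d → ℝ}
    (hP : ∀ t ∈ T, ∀ t' ∈ T, ∀ y, y ∈ cube d t → y - v ∈ cube d t' → (P t ↔ P t')) :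
    IsTiling d (shiftTiles T P v) := by
  constructor
  · rintro t₁ h₁ t₂ h₂ hne
    refine Set.disjoint_left.2 fun y hy₁ hy₂ => ?_
    rcases h₁ with ⟨h₁, hP₁⟩ | ⟨s₁, hs₁, hP₁, rfl⟩ <;>
      rcases h₂ with ⟨h₂, hP₂⟩ | ⟨s₂, hs₂, hP₂, rfl⟩
    · exact hne (hT.eq_of_mem_cube h₁ h₂ hy₁ hy₂)
    · exact hP₁ ((hP t₁ h₁ s₂ hs₂ y hy₁ (mem_cube_add_iff.1 hy₂)).2 hP₂)
    · exact hP₂ ((hP t₂ h₂ s₁ hs₁ y hy₂ (mem_cube_add_iff.1 hy₁)).2 hP₁)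
    · rw [hT.eq_of_mem_cube hs₁ hs₂ (mem_cube_add_iff.1 hy₁) (mem_cube_add_iff.1 hy₂)] at hne
      exact hne rfl
  · refine eq_univ_of_forall fun y => mem_iUnion₂.2 ?_
    obtain ⟨t, ht, hyt⟩ := hT.exists_mem_cube y
    by_cases hPt : P t
    · obtain ⟨u, hu, hyu⟩ := hT.exists_mem_cube (y - v)
      exact ⟨u + v, Or.inr ⟨u, hu, (hP t ht u hu y hyt hyu).1 hPt, rfl⟩, mem_cube_add_iff.2 hyu⟩
    · exact ⟨t, Or.inl ⟨ht, hPt⟩, hyt⟩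

theorem Faceshare.symm {x y : Fin d → ℝ} (h : Faceshare d x y) : Faceshare d y x := by
  obtain ⟨j, rfl | rfl⟩ := h
  · exact ⟨j, Or.inr (add_sub_cancel_right x _).symm⟩
  · exact ⟨j, Or.inl (sub_add_cancel x _).symm⟩

theorem faceshare_add_right_iff {x y v : Fin d → ℝ} :
    Faceshare d (x + v) (y + v) ↔ Faceshare d x y := by
  simp only [Faceshare, add_right_comm x v, add_sub_right_comm x v, add_left_inj]

theorem Faceshare.modEq {x y : Fin d → ℝ} (h : Faceshare d x y) (k : Fin d) :
    x k ≡ y k [PMOD 1] := by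
  rw [modEq_one_iff_exists_int]
  obtain ⟨j, rfl | rfl⟩ := h
  · exact ⟨if k = j then 1 else 0, by split_ifs <;> simp [stdBasis, *]⟩
  · exact ⟨if k = j then -1 else 0, by split_ifs <;> simp [stdBasis, *]⟩

theorem FaceshareFree.shiftTiles {T : Set (Fin d → ℝ)} (hff : FaceshareFree d T)
    {P : (Fin d → ℝ) → Prop} {v : Fin d → ℝ}
    (hmix : ∀ t ∈ T, ¬ P t → ∀ s ∈ T, P s → ¬ Faceshare d (s + v) t) :
    FaceshareFree d (shiftTiles T P v) := by
  rintro t₁ h₁ t₂ h₂ hne hface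
  rcases h₁ with ⟨h₁, hP₁⟩ | ⟨s₁, hs₁, hP₁, rfl⟩ <;>
    rcases h₂ with ⟨h₂, hP₂⟩ | ⟨s₂, hs₂, hP₂, rfl⟩
  · exact hff t₁ h₁ t₂ h₂ hne hface
  · exact hmix t₁ h₁ hP₁ s₂ hs₂ hP₂ hface.symm
  · exact hmix t₂ h₂ hP₂ s₁ hs₁ hP₁ hface
  · exact hff s₁ hs₁ s₂ hs₂ (fun h => hne (h ▸ rfl)) (faceshare_add_right_iff.1 hface)

/-- Replacement lemma: shifting by `b` in coordinate `i` all corners whose `i`-th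
coordinate is `≡ a (mod 1)` yields a cube tiling; moreover if the original tiling
is faceshare-free and no `t ∈ T` has `t i ≡ a + b (mod 1)`, the new tiling is
faceshare-free as well. -/
theorem replacement_faceshareFree (d : ℕ) (T : Set (Fin d → ℝ)) (hT : IsTiling d T)
    (hff : FaceshareFree d T) (a b : ℝ) (i : Fin d)
    (hab : ¬ ∃ t ∈ T, ∃ z : ℤ, t i - (a + b) = (z : ℝ)) :
    IsTiling d
      ({t | t ∈ T ∧ ¬ ∃ z : ℤ, t i - a = (z : ℝ)} ∪
       {t' | ∃ t, t ∈ T ∧ (∃ z : ℤ, t i - a = (z : ℝ)) ∧ t' = t + b • stdBasis d i}) ∧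
    FaceshareFree d
      ({t | t ∈ T ∧ ¬ ∃ z : ℤ, t i - a = (z : ℝ)} ∪
       {t' | ∃ t, t ∈ T ∧ (∃ z : ℤ, t i - a = (z : ℝ)) ∧ t' = t + b • stdBasis d i}) := by
  simp only [← modEq_one_iff_exists_int] at hab ⊢
  have hcolumn : ∀ t ∈ T, ∀ t' ∈ T, ∀ y, y ∈ cube d t → y - b • stdBasis d i ∈ cube d t' →
      (a ≡ t i [PMOD 1] ↔ a ≡ t' i [PMOD 1]) := by
    intro t ht t' ht' y hy hy'
    rw [sub_smul_stdBasis] at hy'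
    have htt' := hT.modEq_of_mem_cube_update ht ht' hy hy'
    exact ⟨fun h => h.trans htt', fun h => h.trans htt'.symm⟩
  have hmix : ∀ t ∈ T, ¬ a ≡ t i [PMOD 1] → ∀ s ∈ T, a ≡ s i [PMOD 1] →
      ¬ Faceshare d (s + b • stdBasis d i) t := by
    intro t ht _ s _ has hface
    have hsb : (s + b • stdBasis d i) i = s i + b := by simp [stdBasis]
    exact hab ⟨t, ht, (has.add_right b).trans (hsb ▸ hface.modEq i)⟩
  exact ⟨hT.shiftTiles hcolumn, hff.shiftTiles hmix⟩
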